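/- Let f₀(u,v) = (1 + 2√3 v)(1 + 3u − √3 v)(1 − 3u − √3 v) and g = log f₀. Then at every point where f₀ > 0, det Hess(g)(u,v) = 324 (1 + 6u² + 6v²) / f₀(u,v)². -/

import Mathlib

open Real Topology

/-- Partial derivative in the first variable. -/
noncomputable def pdx (f : ℝ × ℝ → ℝ) (p : ℝ × ℝ) : ℝ :=
  deriv (fun x => f (x, p.2)) p.1

/-- Partial derivative in the second variable. -/
noncomputable def pdy (f : ℝ × ℝ → ℝ) (p : ℝ × ℝ) : ℝ :=
  deriv (fun y => f (p.1, y)) p.2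

/-- The torsion function of the equilateral triangle `T₀`. -/
noncomputable def f0 (p : ℝ × ℝ) : ℝ :=
  (1 + 2 * Real.sqrt 3 * p.2) * (1 + 3 * p.1 - Real.sqrt 3 * p.2)
    * (1 - 3 * p.1 - Real.sqrt 3 * p.2)

/-- `g = log f₀`. -/
noncomputable def g0 (p : ℝ × ℝ) : ℝ := Real.log (f0 p)

/-!
For `g = log F` one has `Hess g = (F · Hess F - ∇F ∇Fᵀ) / F²`, so `det Hess g` is a polynomial
expression in the derivatives of `F` of order `≤ 2`, divided by `F⁴`. For `F = f₀` that numerator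
equals `324 (1 + 6u² + 6v²) f₀²`, a polynomial identity in `u`, `v` and `√3` which only needs
`√3 ² = 3`.
-/

def HasPartialX (F Fx : ℝ × ℝ → ℝ) : Prop :=
  ∀ q : ℝ × ℝ, HasDerivAt (fun x => F (x, q.2)) (Fx q) q.1

def HasPartialY (F Fy : ℝ × ℝ → ℝ) : Prop :=
  ∀ q : ℝ × ℝ, HasDerivAt (fun y => F (q.1, y)) (Fy q) q.2

variable {F Fx Fy A Ax Ay G : ℝ × ℝ → ℝ}

/-- Since `pdy f p` is definitionally `pdx (f ∘ Prod.swap) p.swap`, this transfers the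
`x`-lemmas below to `y`. -/
theorem HasPartialY.comp_swap (h : HasPartialY F Fy) :
    HasPartialX (F ∘ Prod.swap) (Fy ∘ Prod.swap) :=
  fun q => h q.swap

theorem HasPartialX.pdx_log (hF : HasPartialX F Fx) {q : ℝ × ℝ} (hq : F q ≠ 0) :
    pdx (fun q => log (F q)) q = Fx q / F q :=
  ((hF q).log hq).deriv

theorem HasPartialY.pdy_log (hF : HasPartialY F Fy) {q : ℝ × ℝ} (hq : F q ≠ 0) :
    pdy (fun q => log (F q)) q = Fy q / F q :=
  hF.comp_swap.pdx_log (q := q.swap) hq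

/-- Only `G` near `p` on the horizontal line matters, and there `F ≠ 0` by continuity. -/
theorem HasPartialX.pdx_eq_of_eq_div (hA : HasPartialX A Ax) (hF : HasPartialX F Fx)
    (hG : ∀ q, F q ≠ 0 → G q = A q / F q) {p : ℝ × ℝ} (hp : F p ≠ 0) :
    pdx G p = (Ax p * F p - A p * Fx p) / F p ^ 2 := by
  have hG_near : (fun x => G (x, p.2)) =ᶠ[𝓝 p.1] fun x => A (x, p.2) / F (x, p.2) :=
    ((hF p).continuousAt.eventually_ne hp).mono fun x hx => hG _ hx
  exact hG_near.deriv_eq.trans ((hA p).div (hF p) hp).deriv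

theorem HasPartialY.pdy_eq_of_eq_div (hA : HasPartialY A Ay) (hF : HasPartialY F Fy)
    (hG : ∀ q, F q ≠ 0 → G q = A q / F q) {p : ℝ × ℝ} (hp : F p ≠ 0) :
    pdy G p = (Ay p * F p - A p * Fy p) / F p ^ 2 :=
  hA.comp_swap.pdx_eq_of_eq_div hF.comp_swap (fun q hq => hG q.swap hq) (p := p.swap) hp

theorem det_hessian_log {Fxx Fyy Fyx : ℝ × ℝ → ℝ} (hx : HasPartialX F Fx)
    (hy : HasPartialY F Fy) (hxx : HasPartialX Fx Fxx) (hyy : HasPartialY Fy Fyy)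
    (hyx : HasPartialX Fy Fyx) {p : ℝ × ℝ} (hp : F p ≠ 0) :
    pdx (pdx fun q => log (F q)) p * pdy (pdy fun q => log (F q)) p
        - pdx (pdy fun q => log (F q)) p ^ 2
      = ((Fxx p * F p - Fx p ^ 2) * (Fyy p * F p - Fy p ^ 2)
          - (Fyx p * F p - Fy p * Fx p) ^ 2) / F p ^ 4 := by
  rw [hxx.pdx_eq_of_eq_div hx (fun q hq => hx.pdx_log hq) hp,
    hyy.pdy_eq_of_eq_div hy (fun q hq => hy.pdy_log hq) hp,
    hyx.pdx_eq_of_eq_div hx (fun q hq => hy.pdy_log hq) hp]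
  field_simp

noncomputable def f0x (p : ℝ × ℝ) : ℝ := -18 * p.1 * (1 + 2 * √3 * p.2)

/- The `v`-derivatives are kept in the form `√3 · P(u, √3 v)` that the chain rule produces,
so that the Hessian numerator of `f₀` is `√3 ²` times a polynomial in `u` and `√3 v`. -/
noncomputable def f0y (p : ℝ × ℝ) : ℝ := 6 * √3 * ((√3 * p.2) ^ 2 - √3 * p.2 - 3 * p.1 ^ 2)

noncomputable def f0xx (p : ℝ × ℝ) : ℝ := -18 * (1 + 2 * √3 * p.2)

noncomputable def f0yy (p : ℝ × ℝ) : ℝ := 6 * √3 ^ 2 * (2 * √3 * p.2 - 1)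

noncomputable def f0yx (p : ℝ × ℝ) : ℝ := -36 * √3 * p.1

theorem hasPartialX_f0 : HasPartialX f0 f0x := fun ⟨x, y⟩ => by
  have h₁ := (((hasDerivAt_id' x).const_mul 3).const_add 1).sub_const (√3 * y)
  have h₂ := (((hasDerivAt_id' x).const_mul 3).const_sub 1).sub_const (√3 * y)
  exact (((hasDerivAt_const x (1 + 2 * √3 * y)).mul h₁).mul h₂).congr_deriv
    (by simp only [f0x, Pi.mul_apply]; ring)

theorem hasPartialY_f0 : HasPartialY f0 f0y := fun ⟨x, y⟩ => by
  have h₀ := ((hasDerivAt_id' y).const_mul (2 * √3)).const_add 1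
  have h₁ := ((hasDerivAt_id' y).const_mul √3).const_sub (1 + 3 * x)
  have h₂ := ((hasDerivAt_id' y).const_mul √3).const_sub (1 - 3 * x)
  exact ((h₀.mul h₁).mul h₂).congr_deriv (by simp only [f0y, Pi.mul_apply]; ring)

theorem hasPartialX_f0x : HasPartialX f0x f0xx := fun ⟨x, y⟩ =>
  ((hasDerivAt_id' x).const_mul (-18)).mul_const (1 + 2 * √3 * y) |>.congr_deriv
    (by simp only [f0xx]; ring)

theorem hasPartialY_f0y : HasPartialY f0y f0yy := fun ⟨x, y⟩ => by
  have h := (hasDerivAt_id' y).const_mul √3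
  exact (((h.pow 2).sub h).sub_const (3 * x ^ 2)).const_mul (6 * √3) |>.congr_deriv
    (by simp only [f0yy]; ring)

theorem hasPartialX_f0y : HasPartialX f0y f0yx := fun ⟨x, y⟩ =>
  (((hasDerivAt_pow 2 x).const_mul 3).const_sub ((√3 * y) ^ 2 - √3 * y)).const_mul (6 * √3)
    |>.congr_deriv (by simp only [f0yx]; ring)

theorem f0_hessian_numerator (p : ℝ × ℝ) :
    (f0xx p * f0 p - f0x p ^ 2) * (f0yy p * f0 p - f0y p ^ 2)
        - (f0yx p * f0 p - f0y p * f0x p) ^ 2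
      = 324 * (1 + 6 * p.1 ^ 2 + 6 * p.2 ^ 2) * f0 p ^ 2 := by
  have hs : √3 ^ 2 = 3 := sq_sqrt (by norm_num)
  calc _ = √3 ^ 2 * (108 * (1 + 6 * p.1 ^ 2 + 2 * √3 ^ 2 * p.2 ^ 2) * f0 p ^ 2) := by
        simp only [f0, f0x, f0y, f0xx, f0yy, f0yx]
        ring
    _ = _ := by
        rw [hs]
        ring

/-- At every point where `f₀ > 0`, the determinant of the Hessian of `g = log f₀`
equals `324 (1 + 6u² + 6v²)/f₀(u,v)²`. -/
theorem det_hessian_log_f0 : ∀ p : ℝ × ℝ, 0 < f0 p →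
    pdx (pdx g0) p * pdy (pdy g0) p - pdx (pdy g0) p ^ 2
      = 324 * (1 + 6 * p.1 ^ 2 + 6 * p.2 ^ 2) / f0 p ^ 2 := by
  intro p hp
  have hdet := det_hessian_log hasPartialX_f0 hasPartialY_f0 hasPartialX_f0x hasPartialY_f0y
    hasPartialX_f0y hp.ne'
  rw [f0_hessian_numerator] at hdet
  rw [show g0 = fun q => log (f0 q) from rfl, hdet]
  field_simp
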